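/- arXiv:1208.5981 — 5 statements merged into one kernel-verified Lean document; each statement's English description precedes it below -/
import Mathlib

section
/- The double integral ∫₀^∞ ∫₀^∞ 1/((1+y)(1+x²y)) dx dy, integrating first in x then in y, equals π²/2. -/
/-!
Substituting `x = t / √y` turns the inner integral into `(1 + y)⁻¹ ∫₀^∞ dt / (1 + t²) / √y
= π / (2 (1 + y) √y)`, and substituting `y = t²` turns the remaining integral
`∫₀^∞ dy / ((1 + y) √y)` into `2 ∫₀^∞ dt / (1 + t²) = π`.
-/

open MeasureTheory Real

theorem integral_Ioi_inv_one_add_sq_mul {a : ℝ} (ha : 0 < a) :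
    ∫ x in Set.Ioi (0:ℝ), (1 + x ^ 2 * a)⁻¹ = π / (2 * √a) := by
  have hsqrt : 0 < √a := sqrt_pos.mpr ha
  have hcomp : ∀ x : ℝ, (1 + x ^ 2 * a)⁻¹ = (fun t => (1 + t ^ 2)⁻¹) (x * √a) := fun x => by
    simp only [mul_pow, sq_sqrt ha.le]
  simp_rw [hcomp]
  rw [integral_comp_mul_right_Ioi (fun t => (1 + t ^ 2)⁻¹) 0 hsqrt, zero_mul,
    integral_Ioi_inv_one_add_sq, arctan_zero, smul_eq_mul]
  field_simp
  ring

theorem integral_Ioi_inv_one_add_mul_sqrt :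
    ∫ y in Set.Ioi (0:ℝ), ((1 + y) * √y)⁻¹ = π := by
  rw [← integral_comp_rpow_Ioi_of_pos (g := fun y => ((1 + y) * √y)⁻¹) two_pos]
  have hsubst : ∀ t ∈ Set.Ioi (0:ℝ),
      (2 * t ^ ((2:ℝ) - 1)) • ((1 + t ^ (2:ℝ)) * √(t ^ (2:ℝ)))⁻¹ = 2 * (1 + t ^ 2)⁻¹ := by
    intro t (ht : 0 < t)
    rw [show (2:ℝ) - 1 = 1 by norm_num, rpow_one, rpow_two, sqrt_sq ht.le, smul_eq_mul]
    field_simp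
  rw [setIntegral_congr_fun measurableSet_Ioi hsubst, integral_const_mul,
    integral_Ioi_inv_one_add_sq, arctan_zero]
  ring

theorem stmt0 :
    ∫ y in Set.Ioi (0:ℝ), ∫ x in Set.Ioi (0:ℝ), 1 / ((1 + y) * (1 + x^2 * y))
      = π^2 / 2 := by
  have hinner : ∀ y ∈ Set.Ioi (0:ℝ),
      ∫ x in Set.Ioi (0:ℝ), 1 / ((1 + y) * (1 + x ^ 2 * y)) = π / 2 * ((1 + y) * √y)⁻¹ := by
    intro y (hy : 0 < y)
    simp_rw [one_div, mul_inv (1 + y)]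
    rw [integral_const_mul, integral_Ioi_inv_one_add_sq_mul hy]
    field_simp
  rw [setIntegral_congr_fun measurableSet_Ioi hinner, integral_const_mul,
    integral_Ioi_inv_one_add_mul_sqrt]
  ring
end

section
/- The integral ∫₀^1 (ln x)/(x²−1) dx equals π²/8. -/
/-!
Expanding `1 / (1 - x²)` as a geometric series turns the integrand into `∑ₙ x²ⁿ (-log x)`, a
series of nonnegative terms, so it may be integrated termwise. The substitution `x = e^{-t}`
turns `∫₀¹ xˢ (-log x) dx` into the Gamma integral `∫₀^∞ t e^{-(s+1)t} dt = 1 / (s + 1)²`, and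
`∑ₙ 1 / (2n + 1)² = ζ(2) - ζ(2) / 4 = π² / 8`.
-/

open MeasureTheory Real Set

section

variable {E : Type*} [NormedAddCommGroup E] [NormedSpace ℝ E]

lemma image_exp_neg_Ioi_zero : (fun t : ℝ => exp (-t)) '' Ioi 0 = Ioo 0 1 := by
  rw [show (fun t : ℝ => exp (-t)) = exp ∘ Neg.neg from rfl, image_comp, image_neg_Ioi, neg_zero,
    image_exp_Iio, exp_zero]

lemma hasDerivWithinAt_exp_neg (s : Set ℝ) (t : ℝ) :
    HasDerivWithinAt (fun t : ℝ => exp (-t)) (-exp (-t)) s t := by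
  simpa using ((hasDerivAt_neg t).exp).hasDerivWithinAt

lemma injOn_exp_neg (s : Set ℝ) : s.InjOn (fun t : ℝ => exp (-t)) :=
  fun _ _ _ _ h => neg_injective (exp_injective h)

theorem integral_Ioo_zero_one_eq_integral_comp_exp_neg (g : ℝ → E) :
    ∫ x in Ioo 0 1, g x = ∫ t in Ioi 0, exp (-t) • g (exp (-t)) := by
  simpa [← image_exp_neg_Ioi_zero, abs_of_pos (exp_pos _)] using
    integral_image_eq_integral_abs_deriv_smul measurableSet_Ioi
      (fun t _ => hasDerivWithinAt_exp_neg _ t) (injOn_exp_neg _) g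

theorem integrableOn_Ioo_zero_one_iff_comp_exp_neg (g : ℝ → E) :
    IntegrableOn g (Ioo 0 1) ↔ IntegrableOn (fun t => exp (-t) • g (exp (-t))) (Ioi 0) := by
  simpa [← image_exp_neg_Ioi_zero, abs_of_pos (exp_pos _)] using
    integrableOn_image_iff_integrableOn_abs_deriv_smul measurableSet_Ioi
      (fun t _ => hasDerivWithinAt_exp_neg _ t) (injOn_exp_neg _) g

end

lemma integral_Ioi_mul_exp_neg_mul {r : ℝ} (hr : 0 < r) :
    ∫ t in Ioi (0:ℝ), t * exp (-(r * t)) = 1 / r ^ 2 := by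
  simpa [Gamma_two, div_pow, show (2:ℝ) - 1 = 1 by norm_num] using
    integral_rpow_mul_exp_neg_mul_Ioi two_pos hr

lemma exp_neg_smul_rpow_mul_neg_log_exp_neg (s t : ℝ) :
    exp (-t) • (exp (-t) ^ s * -log (exp (-t))) = t * exp (-((s + 1) * t)) := by
  rw [smul_eq_mul, log_exp, neg_neg, ← exp_mul, ← mul_assoc, ← exp_add]
  ring_nf

theorem integral_rpow_mul_neg_log {s : ℝ} (hs : -1 < s) :
    ∫ x in Ioo 0 1, x ^ s * -log x = 1 / (s + 1) ^ 2 := by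
  simp only [integral_Ioo_zero_one_eq_integral_comp_exp_neg,
    exp_neg_smul_rpow_mul_neg_log_exp_neg]
  exact integral_Ioi_mul_exp_neg_mul (by linarith)

theorem integrableOn_rpow_mul_neg_log {s : ℝ} (hs : -1 < s) :
    IntegrableOn (fun x => x ^ s * -log x) (Ioo 0 1) := by
  simp only [integrableOn_Ioo_zero_one_iff_comp_exp_neg, exp_neg_smul_rpow_mul_neg_log_exp_neg]
  refine Integrable.of_integral_ne_zero ?_
  rw [integral_Ioi_mul_exp_neg_mul (by linarith)]
  exact one_div_ne_zero (pow_ne_zero _ (by linarith))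

theorem hasSum_one_div_odd_sq :
    HasSum (fun n : ℕ => 1 / (2 * (n : ℝ) + 1) ^ 2) (π ^ 2 / 8) := by
  set f : ℕ → ℝ := fun n => 1 / (n : ℝ) ^ 2
  have h_even : HasSum (fun n => f (2 * n)) (π ^ 2 / 24) := by
    have h_quarter : (fun n => f (2 * n)) = fun n => f n / 4 := by
      ext n
      simp only [f, Nat.cast_mul, mul_pow, div_mul_eq_div_div, div_right_comm]
      norm_num
    rw [h_quarter, show π ^ 2 / 24 = π ^ 2 / 6 / 4 by ring]
    exact hasSum_zeta_two.div_const 4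
  have h_odd_summable : Summable (fun n => f (2 * n + 1)) :=
    hasSum_zeta_two.summable.comp_injective (i := fun n => 2 * n + 1) fun _ _ h => by
      simpa using h
  obtain ⟨a, h_odd⟩ := h_odd_summable
  have ha : a = π ^ 2 / 8 := by
    linarith [(h_even.even_add_odd h_odd).unique hasSum_zeta_two]
  rw [ha] at h_odd
  simpa only [f, Nat.cast_add, Nat.cast_mul, Nat.cast_ofNat, Nat.cast_one] using h_odd

theorem hasSum_pow_mul_neg_log {x : ℝ} (hx : x ^ 2 < 1) :
    HasSum (fun n : ℕ => x ^ (2 * n) * -log x) (log x / (x ^ 2 - 1)) := by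
  have h := (hasSum_geometric_of_lt_one (sq_nonneg x) hx).mul_right (-log x)
  simp only [← pow_mul] at h
  rwa [div_eq_inv_mul, ← neg_sub, inv_neg, neg_mul_comm]

theorem stmt6 :
    ∫ x in Set.Ioo (0:ℝ) 1, Real.log x / (x^2 - 1) = π^2 / 8 := by
  have hs (n : ℕ) : (-1 : ℝ) < (2 * n : ℕ) := by linarith [(2 * n).cast_nonneg (α := ℝ)]
  have h_int (n : ℕ) : IntegrableOn (fun x => x ^ (2 * n) * -log x) (Ioo 0 1) := by
    simpa only [rpow_natCast] using integrableOn_rpow_mul_neg_log (hs n)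
  have h_integral (n : ℕ) :
      ∫ x in Ioo 0 1, x ^ (2 * n) * -log x = 1 / (2 * (n : ℝ) + 1) ^ 2 := by
    have h := integral_rpow_mul_neg_log (hs n)
    simp only [rpow_natCast] at h
    rw [h, Nat.cast_mul, Nat.cast_ofNat]
  have h_norm (n : ℕ) :
      ∫ x in Ioo 0 1, ‖x ^ (2 * n) * -log x‖ = ∫ x in Ioo 0 1, x ^ (2 * n) * -log x :=
    setIntegral_congr_fun measurableSet_Ioo fun x hx => Real.norm_of_nonneg <|
      mul_nonneg (pow_nonneg hx.1.le _) (neg_nonneg.2 (log_nonpos hx.1.le hx.2.le))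
  have h_swap := hasSum_integral_of_summable_integral_norm h_int
    (by simpa only [h_norm, h_integral] using hasSum_one_div_odd_sq.summable)
  simp only [h_integral] at h_swap
  rw [setIntegral_congr_fun measurableSet_Ioo fun x hx =>
    (hasSum_pow_mul_neg_log (x := x) (by nlinarith [hx.1, hx.2])).tsum_eq.symm]
  exact h_swap.unique hasSum_one_div_odd_sq
end

section
/- The function (x,y) ↦ 1/((1+y)(1+x²y)) is integrable on (0,∞)×(0,∞), with integral π²/2. -/
open MeasureTheory Real Set Filter Topology

/-
Integrate first in `x`: for fixed `y > 0` the substitution `x ↦ √y x` turns the inner integral into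
`π / (2 √y (1 + y))`. Its primitive in `y` is `π arctan √y`, which gives `π · π/2`. The integrand is
nonnegative, so Tonelli's theorem makes the function integrable on the product and the iterated
integral equal to the double integral.
-/

section Tonelli

variable {α β : Type*} [MeasurableSpace α] [MeasurableSpace β] {μ : Measure α} {ν : Measure β}
  [SFinite μ] [SFinite ν] {s : Set α} {t : Set β}

theorem integrableOn_prod_and_setIntegral_prod_of_nonneg (hs : MeasurableSet s)
    (ht : MeasurableSet t) {f : α × β → ℝ} {g : β → ℝ}
    (hf : AEStronglyMeasurable f ((μ.prod ν).restrict (s ×ˢ t)))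
    (hf_nonneg : ∀ p ∈ s ×ˢ t, 0 ≤ f p)
    (hsection : ∀ y ∈ t, IntegrableOn (fun x ↦ f (x, y)) s μ ∧ ∫ x in s, f (x, y) ∂μ = g y)
    (hg : IntegrableOn g t ν) :
    IntegrableOn f (s ×ˢ t) (μ.prod ν) ∧ ∫ p in s ×ˢ t, f p ∂(μ.prod ν) = ∫ y in t, g y ∂ν := by
  rw [← Measure.prod_restrict] at hf
  rw [IntegrableOn, ← Measure.prod_restrict]
  have hnorm : ∀ y ∈ t, ∫ x in s, ‖f (x, y)‖ ∂μ = g y := fun y hy ↦ by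
    rw [← (hsection y hy).2]
    refine setIntegral_congr_fun hs fun x hx ↦ ?_
    exact Real.norm_of_nonneg (hf_nonneg (x, y) ⟨hx, hy⟩)
  have hint : Integrable f ((μ.restrict s).prod (ν.restrict t)) := by
    refine (integrable_prod_iff' hf).2 ⟨?_, hg.congr_fun_ae ?_⟩
    · filter_upwards [ae_restrict_mem ht] with y hy using (hsection y hy).1
    · filter_upwards [ae_restrict_mem ht] with y hy using (hnorm y hy).symm
  refine ⟨hint, (integral_prod_symm f hint).trans (setIntegral_congr_fun ht fun y hy ↦ ?_)⟩
  exact (hsection y hy).2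

end Tonelli

theorem integrableOn_Ioi_inv_one_add_mul_sq {c : ℝ} (hc : 0 < c) :
    IntegrableOn (fun x : ℝ ↦ (1 + (c * x) ^ 2)⁻¹) (Ioi 0) :=
  (integrableOn_Ioi_comp_mul_left_iff (fun x : ℝ ↦ (1 + x ^ 2)⁻¹) 0 hc).2
    integrable_inv_one_add_sq.integrableOn

theorem integral_Ioi_inv_one_add_mul_sq {c : ℝ} (hc : 0 < c) :
    ∫ x in Ioi (0 : ℝ), (1 + (c * x) ^ 2)⁻¹ = π / (2 * c) := by
  rw [integral_comp_mul_left_Ioi (fun x : ℝ ↦ (1 + x ^ 2)⁻¹) 0 hc, mul_zero,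
    integral_Ioi_inv_one_add_sq, arctan_zero, sub_zero, smul_eq_mul]
  field_simp

theorem hasDerivAt_arctan_sqrt {y : ℝ} (hy : 0 < y) :
    HasDerivAt (fun y ↦ arctan √y) (2 * √y * (1 + y))⁻¹ y := by
  refine ((hasDerivAt_arctan √y).comp y (hasDerivAt_sqrt hy.ne')).congr_deriv ?_
  rw [sq_sqrt hy.le]
  field_simp

theorem integrableOn_and_integral_Ioi_inv_two_mul_sqrt_mul_one_add :
    IntegrableOn (fun y : ℝ ↦ (2 * √y * (1 + y))⁻¹) (Ioi 0) ∧
    ∫ y in Ioi (0 : ℝ), (2 * √y * (1 + y))⁻¹ = π / 2 := by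
  have hcont : ContinuousWithinAt (fun y ↦ arctan √y) (Ici 0) 0 :=
    (continuous_arctan.comp continuous_sqrt).continuousWithinAt
  have hderiv : ∀ y ∈ Ioi (0 : ℝ), HasDerivAt (fun y ↦ arctan √y) (2 * √y * (1 + y))⁻¹ y :=
    fun y hy ↦ hasDerivAt_arctan_sqrt hy
  have hnonneg : ∀ y ∈ Ioi (0 : ℝ), 0 ≤ (2 * √y * (1 + y))⁻¹ := fun y hy ↦ by
    have : 0 < y := hy
    positivity
  have hlim : Tendsto (fun y ↦ arctan √y) atTop (𝓝 (π / 2)) :=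
    (tendsto_nhds_of_tendsto_nhdsWithin tendsto_arctan_atTop).comp tendsto_sqrt_atTop
  refine ⟨integrableOn_Ioi_deriv_of_nonneg hcont hderiv hnonneg hlim, ?_⟩
  rw [integral_Ioi_of_hasDerivAt_of_nonneg hcont hderiv hnonneg hlim]
  simp

theorem stmt13 :
    IntegrableOn (fun p : ℝ × ℝ => 1 / ((1 + p.2) * (1 + p.1^2 * p.2)))
      (Set.Ioi (0:ℝ) ×ˢ Set.Ioi (0:ℝ)) ∧
    ∫ p in Set.Ioi (0:ℝ) ×ˢ Set.Ioi (0:ℝ),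
        1 / ((1 + p.2) * (1 + p.1^2 * p.2)) = π^2 / 2 := by
  have hsection : ∀ y ∈ Ioi (0 : ℝ),
      IntegrableOn (fun x ↦ 1 / ((1 + y) * (1 + x ^ 2 * y))) (Ioi 0) ∧
      ∫ x in Ioi (0 : ℝ), 1 / ((1 + y) * (1 + x ^ 2 * y)) = π * (2 * √y * (1 + y))⁻¹ := by
    intro y (hy : 0 < y)
    have hsplit : ∀ x : ℝ, 1 / ((1 + y) * (1 + x ^ 2 * y)) = (1 + y)⁻¹ * (1 + (√y * x) ^ 2)⁻¹ :=
      fun x ↦ by rw [mul_pow, sq_sqrt hy.le, one_div, mul_inv, mul_comm y]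
    simp_rw [hsplit]
    have hsqrt : 0 < √y := sqrt_pos.2 hy
    refine ⟨(integrableOn_Ioi_inv_one_add_mul_sq hsqrt).const_mul _, ?_⟩
    rw [integral_const_mul, integral_Ioi_inv_one_add_mul_sq hsqrt]
    field_simp
  obtain ⟨houter_int, houter⟩ := integrableOn_and_integral_Ioi_inv_two_mul_sqrt_mul_one_add
  have h := integrableOn_prod_and_setIntegral_prod_of_nonneg (μ := volume) (ν := volume)
    (f := fun p : ℝ × ℝ ↦ 1 / ((1 + p.2) * (1 + p.1 ^ 2 * p.2)))
    measurableSet_Ioi measurableSet_Ioi (by fun_prop : Measurable _).aestronglyMeasurable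
    (fun p ⟨_, (hp : 0 < p.2)⟩ ↦ by positivity) hsection (houter_int.const_mul π)
  rw [integral_const_mul, houter] at h
  rw [Measure.volume_eq_prod]
  exact ⟨h.1, h.2.trans (by ring)⟩
end

section
/- The double integral ∫₀^1 ∫₀^∞ x/((1+x²)(1+x²y²)) dx dy equals π²/8. -/
open MeasureTheory Real Set Filter Topology

/-!
Integrating first in `y` gives `∫₀¹ x / ((1 + x²)(1 + x²y²)) dy = arctan x / (1 + x²)`, the
derivative of `arctan² x / 2`, so the integral over `x > 0` is `(π/2)² / 2 = π² / 8`.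
Since the integrand is nonnegative, the same computation shows it is integrable on the
product, so Fubini allows swapping the two integrations.
-/

lemma integral_div_one_add_mul_sq (x a b : ℝ) :
    ∫ y in a..b, x / (1 + (x * y) ^ 2) = arctan (x * b) - arctan (x * a) := by
  refine intervalIntegral.integral_eq_sub_of_hasDerivAt (f := fun y => arctan (x * y))
    (fun y _ => ?_) ?_
  · exact ((hasDerivAt_id y).const_mul x).arctan.congr_deriv (by simp [div_eq_inv_mul])
  · exact (continuous_const.div (by fun_prop) fun y => by positivity).intervalIntegrable _ _

lemma integral_Ioo_zero_one_div_one_add_sq_mul (x : ℝ) :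
    ∫ y in Ioo (0 : ℝ) 1, x / ((1 + x ^ 2) * (1 + x ^ 2 * y ^ 2)) = arctan x / (1 + x ^ 2) := by
  have hfactor : ∀ y : ℝ, x / ((1 + x ^ 2) * (1 + x ^ 2 * y ^ 2))
      = (1 + x ^ 2)⁻¹ * (x / (1 + (x * y) ^ 2)) := fun y => by
    rw [mul_pow, div_mul_eq_div_div_swap, div_eq_inv_mul]
  rw [← integral_Ioc_eq_integral_Ioo, ← intervalIntegral.integral_of_le zero_le_one]
  simp_rw [hfactor, intervalIntegral.integral_const_mul, integral_div_one_add_mul_sq]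
  simp [div_eq_inv_mul]

lemma hasDerivAt_arctan_sq_div_two (x : ℝ) :
    HasDerivAt (fun x => arctan x ^ 2 / 2) (arctan x / (1 + x ^ 2)) x :=
  ((hasDerivAt_arctan x).pow 2).div_const 2 |>.congr_deriv (by field_simp; ring)

lemma tendsto_arctan_sq_div_two_atTop :
    Tendsto (fun x => arctan x ^ 2 / 2) atTop (𝓝 (π ^ 2 / 8)) := by
  convert ((tendsto_arctan_atTop.mono_right nhdsWithin_le_nhds).pow 2).div_const 2 using 2
  ring

lemma arctan_div_one_add_sq_nonneg {x : ℝ} (hx : 0 ≤ x) : 0 ≤ arctan x / (1 + x ^ 2) :=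
  div_nonneg (arctan_nonneg.2 hx) (by positivity)

lemma integrableOn_Ioi_arctan_div_one_add_sq :
    IntegrableOn (fun x => arctan x / (1 + x ^ 2)) (Ioi 0) :=
  integrableOn_Ioi_deriv_of_nonneg' (fun x _ => hasDerivAt_arctan_sq_div_two x)
    (fun _ hx => arctan_div_one_add_sq_nonneg (le_of_lt hx)) tendsto_arctan_sq_div_two_atTop

lemma integral_Ioi_arctan_div_one_add_sq :
    ∫ x in Ioi 0, arctan x / (1 + x ^ 2) = π ^ 2 / 8 := by
  simpa using integral_Ioi_of_hasDerivAt_of_nonneg' (fun x _ => hasDerivAt_arctan_sq_div_two x)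
    (fun _ hx => arctan_div_one_add_sq_nonneg (le_of_lt hx)) tendsto_arctan_sq_div_two_atTop

lemma integrable_div_one_add_sq_mul_prod :
    Integrable (fun p : ℝ × ℝ => p.2 / ((1 + p.2 ^ 2) * (1 + p.2 ^ 2 * p.1 ^ 2)))
      ((volume.restrict (Ioo 0 1)).prod (volume.restrict (Ioi 0))) := by
  have hcont : Continuous fun p : ℝ × ℝ => p.2 / ((1 + p.2 ^ 2) * (1 + p.2 ^ 2 * p.1 ^ 2)) :=
    Continuous.div (by fun_prop) (by fun_prop) fun p => by positivity
  refine (integrable_prod_iff' hcont.aestronglyMeasurable).2 ⟨.of_forall fun x => ?_, ?_⟩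
  · exact ((hcont.comp (.prodMk_left x)).integrableOn_Icc).mono_set Ioo_subset_Icc_self
  · refine integrableOn_Ioi_arctan_div_one_add_sq.congr_fun (fun x hx => ?_) measurableSet_Ioi
    dsimp only
    rw [← integral_Ioo_zero_one_div_one_add_sq_mul]
    refine integral_congr_ae (.of_forall fun y => (norm_of_nonneg ?_).symm)
    have : (0 : ℝ) ≤ x := le_of_lt hx
    positivity

theorem stmt16 :
    ∫ y in Set.Ioo (0:ℝ) 1, ∫ x in Set.Ioi (0:ℝ),
        x / ((1 + x^2) * (1 + x^2 * y^2)) = π^2 / 8 := by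
  rw [integral_integral_swap integrable_div_one_add_sq_mul_prod]
  simp_rw [integral_Ioo_zero_one_div_one_add_sq_mul]
  exact integral_Ioi_arctan_div_one_add_sq
end

section
/- The double integral ∫₀^1 ∫₀^1 1/(1−xy) dx dy equals ∑_{n=1}^∞ 1/n². -/
open MeasureTheory Real

lemma intg {f : ℝ → ℝ} (hf : Continuous f) : IntegrableOn f (Set.Ioo (0:ℝ) 1) :=
  (hf.integrableOn_Icc).mono_set Set.Ioo_subset_Icc_self

lemma xint (n : ℕ) : ∫ x in Set.Ioo (0:ℝ) 1, x ^ n = 1 / (n + 1) := by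
  rw [← MeasureTheory.integral_Ioc_eq_integral_Ioo,
    ← intervalIntegral.integral_of_le zero_le_one, integral_pow]
  simp

lemma inner_int {y : ℝ} (hy : y ∈ Set.Ioo (0:ℝ) 1) :
    ∫ x in Set.Ioo (0:ℝ) 1, 1 / (1 - x * y) = ∑' n : ℕ, y ^ n / (n + 1) := by
  have key : ∑' n : ℕ, (∫ x in Set.Ioo (0:ℝ) 1, (x * y) ^ n)
      = ∫ x in Set.Ioo (0:ℝ) 1, (∑' n : ℕ, (x * y) ^ n) := by
    apply integral_tsum_of_summable_integral_norm
    · intro n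
      exact intg (by continuity)
    · apply Summable.of_nonneg_of_le (fun n => ?_) (fun n => ?_)
        (summable_geometric_of_lt_one hy.1.le hy.2)
      · positivity
      · calc ∫ x in Set.Ioo (0:ℝ) 1, ‖(x * y) ^ n‖
            = ∫ x in Set.Ioo (0:ℝ) 1, x ^ n * y ^ n := by
              apply setIntegral_congr_fun measurableSet_Ioo
              intro x hx
              simp only []
              rw [mul_pow, Real.norm_of_nonneg
                (mul_nonneg (pow_nonneg hx.1.le n) (pow_nonneg hy.1.le n))]
          _ = (∫ x in Set.Ioo (0:ℝ) 1, x ^ n) * y ^ n := integral_mul_const _ _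
          _ = 1 / (n + 1) * y ^ n := by rw [xint]
          _ ≤ y ^ n := by
              have h1 : (1:ℝ) / (n + 1) ≤ 1 := by
                rw [div_le_one (by positivity)]; linarith [Nat.cast_nonneg (α := ℝ) n]
              nlinarith [pow_nonneg hy.1.le n]
  have e1 : ∀ n : ℕ, (∫ x in Set.Ioo (0:ℝ) 1, (x * y) ^ n) = y ^ n / (n + 1) := by
    intro n
    simp_rw [mul_pow]
    rw [integral_mul_const, xint]
    ring
  have e2 : ∫ x in Set.Ioo (0:ℝ) 1, (∑' n : ℕ, (x * y) ^ n)
      = ∫ x in Set.Ioo (0:ℝ) 1, 1 / (1 - x * y) := by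
    apply setIntegral_congr_fun measurableSet_Ioo
    intro x hx
    have hxy0 : 0 ≤ x * y := mul_nonneg hx.1.le hy.1.le
    simp only []
    have hxy1 : x * y < 1 := by nlinarith [hx.1, hx.2, hy.1, hy.2]
    rw [tsum_geometric_of_lt_one hxy0 hxy1, one_div]
  rw [← e2, ← key]
  exact tsum_congr e1

theorem stmt18 :
    ∫ y in Set.Ioo (0:ℝ) 1, ∫ x in Set.Ioo (0:ℝ) 1, 1 / (1 - x * y)
      = ∑' n : ℕ, 1 / ((n : ℝ) + 1)^2 := by
  have step1 : ∫ y in Set.Ioo (0:ℝ) 1, ∫ x in Set.Ioo (0:ℝ) 1, 1 / (1 - x * y)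
      = ∫ y in Set.Ioo (0:ℝ) 1, ∑' n : ℕ, y ^ n / (n + 1) :=
    setIntegral_congr_fun measurableSet_Ioo (fun y hy => inner_int hy)
  have hsum : Summable (fun n : ℕ => 1 / ((n : ℝ) + 1) ^ 2) := by
    have := Real.summable_one_div_nat_pow.mpr (le_refl 2)
    have := (summable_nat_add_iff 1).mpr this
    simpa using this
  have key : ∑' n : ℕ, (∫ y in Set.Ioo (0:ℝ) 1, y ^ n / (n + 1))
      = ∫ y in Set.Ioo (0:ℝ) 1, ∑' n : ℕ, y ^ n / (n + 1) := by
    apply integral_tsum_of_summable_integral_norm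
    · intro n
      exact intg (by continuity)
    · apply Summable.of_nonneg_of_le (fun n => ?_) (fun n => ?_) hsum
      · positivity
      · calc ∫ y in Set.Ioo (0:ℝ) 1, ‖y ^ n / (n + 1)‖
            = ∫ y in Set.Ioo (0:ℝ) 1, y ^ n / (n + 1) := by
              apply setIntegral_congr_fun measurableSet_Ioo
              intro y hy
              simp only []
              rw [Real.norm_of_nonneg
                (div_nonneg (pow_nonneg hy.1.le n) (by positivity))]
          _ = (∫ y in Set.Ioo (0:ℝ) 1, y ^ n) / (n + 1) := integral_div _ _
          _ = 1 / (n + 1) / (n + 1) := by rw [xint]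
          _ ≤ 1 / ((n : ℝ) + 1) ^ 2 := by rw [div_div, ← pow_two]
  have e1 : ∀ n : ℕ, (∫ y in Set.Ioo (0:ℝ) 1, y ^ n / (n + 1)) = 1 / ((n : ℝ) + 1) ^ 2 := by
    intro n
    rw [integral_div, xint, div_div, ← pow_two]
  rw [step1, ← key]
  exact tsum_congr e1
end
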